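/- arXiv:2209.12326 — 2 statements merged into one kernel-verified Lean document; each statement's English description precedes it below -/
import Mathlib

section
/- Fix an integer k ≥ 1. If a sequence A : ℕ → ℕ satisfies A(0) = 1 and, for every n ≥ 1, A(n) = Σ over all k-tuples (a_1,…,a_k) of non-negative integers with a_1 + ⋯ + a_k = n − 1 of the product A(a_1)·A(a_2)⋯A(a_k), then for every n, (k·n + 1)·A(n) = binom(k·n + 1, n); that is, A(n) = (1/(kn+1))·binom(kn+1, n), the n-th k-Catalan number. -/
/-!
The generating function `F = ∑ A n Xⁿ` satisfies `F = 1 + X F^k`, hence `F^(p+1) = F^p + X F^(p+k)`.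
Comparing coefficients, `[Xⁿ] F^p` obeys a Pascal-type recurrence in `(n, p)` that the Raney numbers
`p/(kn+p) · C(kn+p, n)` obey as well; induction on `n` and then on `p` identifies the two, and
`p = 1` is the claim.
-/

open PowerSeries

theorem PowerSeries.coeff_pow_eq_sum_antidiagonalTuple {R : Type*} [CommSemiring R]
    (φ : R⟦X⟧) (k n : ℕ) :
    coeff n (φ ^ k) = ∑ x ∈ Finset.Nat.antidiagonalTuple k n, ∏ i, coeff (x i) φ := by
  rw [← Fin.prod_const, coeff_prod, ← Finset.piAntidiag_univ_fin_eq_antidiagonalTuple]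
  refine Finset.sum_nbij' (⇑) Finsupp.equivFunOnFinite.symm ?_ ?_ ?_ ?_ ?_ <;> intro f hf
  all_goals simp_all

/-- The recurrence `R(n+1, p+1) = R(n+1, p) + R(n, p+k)` of the Raney numbers
`R(n, p) = p/(kn+p) · C(kn+p, n)`, with denominators cleared. -/
theorem Nat.raney_succ_succ {k n p a b : ℕ} (hk : 0 < k)
    (ha : (k * (n + 1) + p) * a = p * (k * (n + 1) + p).choose (n + 1))
    (hb : (k * n + (p + k)) * b = (p + k) * (k * n + (p + k)).choose n) :
    (k * (n + 1) + (p + 1)) * (a + b) = (p + 1) * (k * (n + 1) + (p + 1)).choose (n + 1) := by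
  set N := k * (n + 1) + p with hN
  rw [show k * n + (p + k) = N by ring] at hb
  rw [show k * (n + 1) + (p + 1) = N + 1 by ring]
  have h1 := N.add_one_mul_choose_eq n
  have h2 := N.choose_succ_right_eq n
  have hnN : n ≤ N := by nlinarith
  have hN0 : 0 < N := by nlinarith
  apply Nat.eq_of_mul_eq_mul_left (Nat.mul_pos hN0 n.succ_pos)
  zify [hnN] at h1 h2 ha hb hN ⊢
  linear_combination (n + 1 : ℤ) * (N + 1) * (ha + hb) + (N + 1 : ℤ) * p * h2 +
    (N : ℤ) * (p + 1) * h1 - (N + 1 : ℤ) * N.choose n * hN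

section FussCatalanEquation

variable {R : Type*} [CommSemiring R] {k : ℕ} {F : R⟦X⟧}

theorem PowerSeries.constantCoeff_eq_one_of_eq_one_add_X_mul_pow (hF : F = 1 + X * F ^ k) :
    constantCoeff F = 1 := by
  rw [hF]
  simp

theorem PowerSeries.coeff_succ_pow_succ_of_eq_one_add_X_mul_pow (hF : F = 1 + X * F ^ k)
    (n p : ℕ) :
    coeff (n + 1) (F ^ (p + 1)) = coeff (n + 1) (F ^ p) + coeff n (F ^ (p + k)) := by
  have hpow : F ^ (p + 1) = F ^ p + X * F ^ (p + k) := by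
    rw [pow_succ]
    nth_rw 2 [hF]
    ring
  rw [hpow, map_add, coeff_succ_X_mul]

end FussCatalanEquation

theorem PowerSeries.mul_coeff_pow_of_eq_one_add_X_mul_pow {k : ℕ} (hk : 0 < k) {F : ℕ⟦X⟧}
    (hF : F = 1 + X * F ^ k) (n p : ℕ) :
    (k * n + p) * coeff n (F ^ p) = p * (k * n + p).choose n := by
  induction n generalizing p with
  | zero => simp [constantCoeff_eq_one_of_eq_one_add_X_mul_pow hF]
  | succ n ih =>
    induction p with
    | zero => simp
    | succ p ihp =>
      rw [coeff_succ_pow_succ_of_eq_one_add_X_mul_pow hF]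
      exact Nat.raney_succ_succ hk ihp (ih (p + k))

/-- Fix `k ≥ 1`. If `A 0 = 1` and, for every `n ≥ 1`,
`A n = Σ_{a₁+⋯+a_k = n-1} A a₁ ⋯ A a_k`, then
`(k·n+1)·A n = binom (k·n+1) n`, i.e. `A n` is the `n`-th `k`-Catalan number. -/
theorem stmt_0 (k : ℕ) (hk : 1 ≤ k) (A : ℕ → ℕ) (h0 : A 0 = 1)
    (hrec : ∀ n : ℕ, 1 ≤ n →
      A n = ∑ x ∈ Finset.Nat.antidiagonalTuple k (n - 1), ∏ i : Fin k, A (x i)) :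
    ∀ n : ℕ, (k * n + 1) * A n = (k * n + 1).choose n := by
  have hF : PowerSeries.mk A = 1 + X * PowerSeries.mk A ^ k := by
    ext (_ | n)
    · simp [h0]
    · simp [coeff_succ_X_mul, coeff_pow_eq_sum_antidiagonalTuple, hrec (n + 1) n.succ_pos]
  intro n
  simpa using mul_coeff_pow_of_eq_one_add_X_mul_pow hk hF n 1
end

section
/- For every n ≥ 0, Σ over all quadruples (a,b,c,d) of non-negative integers with a + b + c + d = n of the product C³_a·C³_b·C³_c·C³_d equals (4/(3n+4))·binom(3n+4, n); equivalently, (3n+4) · Σ_{a+b+c+d=n} C³_a C³_b C³_c C³_d = 4·binom(3n+4, n). (In Rothe-number notation this says A_n(4,3) is the fourfold convolution of the 3-Catalan numbers.) -/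
/-- The `m`-th 3-Catalan number `C³_m = (1/(2m+1))·binom(3m,m)`, as a rational number. -/
noncomputable def threeCatalan (m : ℕ) : ℚ :=
  ((3 * m).choose m : ℚ) / (2 * m + 1)

/-!
The Rothe numbers `A_n(x,p) = x/(x+pn)·binom(x+pn,n)` satisfy the Pascal-type recurrence
`A_{n+1}(x+1) = A_{n+1}(x) + A_n(x+p)`, and `A_n(1,p)` is the `p`-Catalan number. A double
induction on `n` and `x` turns the recurrence into `C^{(p)} * A(x,p) = A(x+1,p)` (convolution
in `n`), so the `k`-fold convolution power of `C^{(p)}` is `A(k,p)`; for `p = 3`, `k = 4` this is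
the theorem.
-/

open Finset

theorem Finset.Nat.sum_antidiagonalTuple_succ {M : Type*} [AddCommMonoid M] (k n : ℕ)
    (f : (Fin (k + 1) → ℕ) → M) :
    ∑ t ∈ Nat.antidiagonalTuple (k + 1) n, f t =
      ∑ ij ∈ antidiagonal n, ∑ t ∈ Nat.antidiagonalTuple k ij.2, f (Fin.cons ij.1 t) := by
  rw [sum_sigma']
  refine sum_nbij' (fun t ↦ ⟨(t 0, ∑ i, Fin.tail t i), Fin.tail t⟩)
    (fun s ↦ Fin.cons s.1.1 s.2) ?_ ?_ (fun t _ ↦ Fin.cons_self_tail t) ?_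
    (fun t _ ↦ by rw [Fin.cons_self_tail])
  · intro t ht
    simpa [Fin.sum_univ_succ, Nat.mem_antidiagonalTuple, Fin.tail] using ht
  · rintro ⟨⟨i, j⟩, t⟩ hs
    simp only [mem_sigma, HasAntidiagonal.mem_antidiagonal, Nat.mem_antidiagonalTuple] at hs ⊢
    rw [Fin.sum_cons, hs.2, hs.1]
  · rintro ⟨⟨i, j⟩, t⟩ hs
    simp only [mem_sigma, Nat.mem_antidiagonalTuple] at hs
    simp [hs.2]

/-- The Rothe number `A_n(x,p)`. The case `n = 0` is split off because `A_0(0,p) = 1`, while the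
formula would give `0 / 0 = 0`. -/
noncomputable def rothe (p x n : ℕ) : ℚ :=
  if n = 0 then 1 else x * ((x + p * n).choose n : ℚ) / (x + p * n : ℕ)

section Rothe

variable {p : ℕ}

@[simp]
theorem rothe_zero (p x : ℕ) : rothe p x 0 = 1 := if_pos rfl

theorem rothe_of_ne_zero {x n : ℕ} (h : n ≠ 0 ∨ x ≠ 0) :
    rothe p x n = x * ((x + p * n).choose n : ℚ) / (x + p * n : ℕ) := by
  rcases h with hn | hx
  · exact if_neg hn
  · rcases eq_or_ne n 0 with rfl | hn
    · simp [rothe, hx]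
    · exact if_neg hn

@[simp]
theorem rothe_zero_succ (p n : ℕ) : rothe p 0 (n + 1) = 0 := by
  simp [rothe]

theorem rothe_succ_succ (hp : 0 < p) (x n : ℕ) :
    rothe p (x + 1) (n + 1) = rothe p x (n + 1) + rothe p (x + p) n := by
  rw [rothe_of_ne_zero (.inl n.succ_ne_zero), rothe_of_ne_zero (.inl n.succ_ne_zero),
    rothe_of_ne_zero (.inr (by omega))]
  set N := x + p * (n + 1) with hN
  rw [show x + 1 + p * (n + 1) = N + 1 by omega, show x + p + p * n = N by rw [hN]; ring]
  have key : ((N + 1) * N.choose n : ℚ) = (N.choose n + N.choose (n + 1)) * (n + 1) := by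
    exact_mod_cast Nat.choose_succ_succ' N n ▸ Nat.add_one_mul_choose_eq N n
  have hNq : (N : ℚ) = x + p * (n + 1) := by rw [hN]; push_cast; ring
  have hN0 : (N : ℚ) ≠ 0 := by rw [hNq]; positivity
  rw [Nat.choose_succ_succ' N n]
  push_cast
  field_simp
  rw [hNq] at key ⊢
  linear_combination (-(p : ℚ)) * key

theorem sum_antidiagonal_rothe_one_mul (hp : 0 < p) (n x : ℕ) :
    ∑ ij ∈ antidiagonal n, rothe p 1 ij.1 * rothe p x ij.2 = rothe p (x + 1) n := by
  induction n generalizing x with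
  | zero => simp
  | succ n ih =>
    induction x with
    | zero => simp [Nat.sum_antidiagonal_succ']
    | succ x ihx =>
      calc ∑ ij ∈ antidiagonal (n + 1), rothe p 1 ij.1 * rothe p (x + 1) ij.2
          = ∑ ij ∈ antidiagonal (n + 1), rothe p 1 ij.1 * rothe p x ij.2
              + ∑ ij ∈ antidiagonal n, rothe p 1 ij.1 * rothe p (x + p) ij.2 := by
            simp only [Nat.sum_antidiagonal_succ', rothe_succ_succ hp, rothe_zero, mul_add,
              sum_add_distrib]
            ring
        _ = rothe p (x + 1 + 1) (n + 1) := by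
            rw [ihx, ih, rothe_succ_succ hp (x + 1), add_right_comm x 1 p]

theorem sum_antidiagonalTuple_prod_rothe_one (hp : 0 < p) (k n : ℕ) :
    ∑ t ∈ Nat.antidiagonalTuple k n, ∏ i, rothe p 1 (t i) = rothe p k n := by
  induction k generalizing n with
  | zero => cases n <;> simp
  | succ k ih =>
    simp only [Nat.sum_antidiagonalTuple_succ, Fin.prod_univ_succ, Fin.cons_zero, Fin.cons_succ,
      ← mul_sum, ih, sum_antidiagonal_rothe_one_mul hp]

end Rothe

theorem threeCatalan_eq_rothe (n : ℕ) : threeCatalan n = rothe 3 1 n := by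
  rw [rothe_of_ne_zero (.inr one_ne_zero), threeCatalan, add_comm 1]
  have key : ((3 * n).choose n * (3 * n + 1) : ℚ) = (3 * n + 1).choose n * (2 * n + 1) := by
    exact_mod_cast (show 3 * n + 1 - n = 2 * n + 1 by omega) ▸ Nat.choose_mul_succ_eq (3 * n) n
  push_cast
  field_simp
  linear_combination key

/-- For every `n ≥ 0`,
`Σ_{a+b+c+d=n} C³_a·C³_b·C³_c·C³_d = (4/(3n+4))·binom(3n+4,n)`, equivalently
`(3n+4) · Σ_{a+b+c+d=n} C³_a C³_b C³_c C³_d = 4·binom(3n+4,n)`. -/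
theorem stmt_1 (n : ℕ) :
    ((3 * n + 4 : ℕ) : ℚ) *
        ∑ x ∈ Finset.Nat.antidiagonalTuple 4 n,
          threeCatalan (x 0) * threeCatalan (x 1) * threeCatalan (x 2) * threeCatalan (x 3) =
      4 * ((3 * n + 4).choose n : ℚ) := by
  have hsum : ∑ x ∈ Finset.Nat.antidiagonalTuple 4 n,
      threeCatalan (x 0) * threeCatalan (x 1) * threeCatalan (x 2) * threeCatalan (x 3) =
        rothe 3 4 n := by
    simpa only [Fin.prod_univ_four, threeCatalan_eq_rothe] using
      sum_antidiagonalTuple_prod_rothe_one three_pos 4 n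
  rw [hsum, rothe_of_ne_zero (.inr four_ne_zero), add_comm 4]
  field_simp
  push_cast
  ring
end
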